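/- For every ε > 0 there exists η with 0 < η ≤ 1 such that the following holds for every integer s ≥ 2 and every finite additive group Z. Let ν : Z → ℝ be nonnegative with ‖ν − 1‖_{cut^s(Z)} ≤ η. Then: (i) for every g : Z → ℝ with 0 ≤ g ≤ ν pointwise there exists w : Z → [0,1] such that ‖g − w‖_{cut^s(Z)} ≤ ε; and (ii) for every f : Z → ℝ with |f| ≤ ν pointwise there exists h : Z → [−1,1] such that ‖f − h‖_{cut^s(Z)} ≤ ε. -/

import Mathlib

open Finset

/-- The average of a real-valued function on a finite type. -/
noncomputable def avg (α : Type*) [Fintype α] (f : α → ℝ) : ℝ :=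
  (∑ x, f x) / (Fintype.card α : ℝ)

/-- The `ℓ`-box norm `‖F‖_{□_ℓ(V^s)}` of `F : V^s → ℝ`.  Here `V^{s×ℓ}` is modelled as
`Fin s → Fin ℓ → V`, an element `ω ∈ [ℓ]^s` as `ω : Fin s → Fin ℓ`, and the projection
`π_ω : V^{s×ℓ} → V^s` sends `x` to `fun i => x i (ω i)`.  The box norm `‖F‖_{□(V^s)}`
is the case `ℓ = 2`. -/
noncomputable def boxNorm (V : Type*) [Fintype V] (s ℓ : ℕ) (F : (Fin s → V) → ℝ) : ℝ :=
  (avg (Fin s → Fin ℓ → V) fun x =>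
      ∏ ω : Fin s → Fin ℓ, F fun i => x i (ω i)) ^ (((ℓ : ℝ) ^ s)⁻¹)

/-- The cut norm `‖F‖_{cut(V^s)}` of `F : V^s → ℝ`; the distinguished element `1^s` of
`[2]^s` is modelled as `fun _ => (0 : Fin 2)`. -/
noncomputable def cutNorm (V : Type*) [Fintype V] (s : ℕ) (F : (Fin s → V) → ℝ) : ℝ :=
  sSup {r : ℝ | ∃ H : (Fin s → Fin 2) → (Fin s → V) → ℝ,
    (∀ ω y, H ω y ∈ Set.Icc (-1 : ℝ) 1) ∧
    r = avg (Fin s → Fin 2 → V) fun x =>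
      F (fun i => x i 0) *
        ∏ ω ∈ Finset.univ.filter (fun ω : Fin s → Fin 2 => ω ≠ fun _ => 0),
          H ω fun i => x i (ω i)}
/-- `F_f : Z^s → ℝ`, `F_f(x₁,…,x_s) = f(x₁ + ⋯ + x_s)`. -/
noncomputable def addLift (Z : Type*) [AddCommGroup Z] (s : ℕ) (f : Z → ℝ) :
    (Fin s → Z) → ℝ :=
  fun x => f (∑ i, x i)

/-- The `s`-additive cut norm `‖f‖_{cut^s(Z)} = ‖F_f‖_{cut(Z^s)}`. -/
noncomputable def addCutNorm (Z : Type*) [AddCommGroup Z] [Fintype Z] (s : ℕ) (f : Z → ℝ) : ℝ :=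
  cutNorm Z s (addLift Z s f)

open scoped BigOperators

/-!
The cut norm of `f` is the largest correlation `𝔼 z, f z * ψ z` with a *dual function* `ψ`: the
average of a cut weight `∏_{ω ≠ 1^s} H_ω(π_ω x)` over the fibre `{x | x₁₁ + ⋯ + x_{s1} = z}`.
A product of two dual functions is an average of dual functions (shift the second fibre onto the
first), so the convex hull of the dual functions is closed under products, and for a polynomial
`P` the correlation of `ν - 1` with `P ∘ ψ` is at most `‖ν - 1‖` times the `ℓ¹`-norm of the
coefficients of `P`.

If no `w : Z → [0, 1]` were `ε`-close to `g`, a minimax argument (Hahn–Banach and compactness of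
`[0, 1]^Z`) would give a single `ψ` in the hull with `𝔼 (g - w) ψ > ε` for all such `w`. For `w`
the indicator of `{ψ ≥ 0}` this is at most `𝔼 (ν - 1) max(ψ, 0)`, which is small because
`max(·, 0)` is uniformly approximated on `[-1, 1]` by a polynomial. The signed statement follows
from `f = f⁺ - f⁻`.
-/

section CutNorm

variable {V : Type*} {s : ℕ}

/-- A family `⟨H_ω : ω ∈ [2]^s⟩` as in the definition of the cut norm (`H_{1^s}` is ignored). -/
abbrev CutFamily (V : Type*) (s : ℕ) : Type _ := (Fin s → Fin 2) → (Fin s → V) → ℝ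

def cutWeight (H : CutFamily V s) (x : Fin s → Fin 2 → V) : ℝ :=
  ∏ ω ∈ univ.filter (fun ω : Fin s → Fin 2 => ω ≠ fun _ => 0), H ω fun i => x i (ω i)

def IsCutFamily (H : CutFamily V s) : Prop :=
  ∀ ω y, H ω y ∈ Set.Icc (-1 : ℝ) 1

lemma IsCutFamily.abs_le_one {H : CutFamily V s} (hH : IsCutFamily H) (ω y) :
    |H ω y| ≤ 1 :=
  _root_.abs_le.2 (hH ω y)

lemma isCutFamily_one : IsCutFamily (1 : CutFamily V s) :=
  fun _ _ => ⟨by norm_num, le_rfl⟩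

lemma IsCutFamily.mul {H₁ H₂ : CutFamily V s} (h₁ : IsCutFamily H₁)
    (h₂ : IsCutFamily H₂) : IsCutFamily (H₁ * H₂) := fun ω y =>
  _root_.abs_le.1 <| by
    rw [Pi.mul_apply, Pi.mul_apply, abs_mul]
    exact mul_le_one₀ (h₁.abs_le_one ω y) (abs_nonneg _) (h₂.abs_le_one ω y)

lemma cutWeight_one : cutWeight (1 : CutFamily V s) = 1 := by
  ext x
  simp [cutWeight]

lemma cutWeight_mul (H₁ H₂ : CutFamily V s) (x : Fin s → Fin 2 → V) :
    cutWeight (H₁ * H₂) x = cutWeight H₁ x * cutWeight H₂ x :=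
  prod_mul_distrib

lemma abs_cutWeight_le {H : CutFamily V s} (hH : IsCutFamily H) (x) :
    |cutWeight H x| ≤ 1 := by
  rw [cutWeight, abs_prod]
  exact prod_le_one (fun _ _ => abs_nonneg _) fun ω _ => hH.abs_le_one ω _

/-- Flip the sign of the factor at `ω = 2^s`, which is not `1^s` since `s ≠ 0`. -/
lemma exists_cutWeight_eq_neg [NeZero s] {H : CutFamily V s}
    (hH : IsCutFamily H) : ∃ H', IsCutFamily H' ∧ cutWeight H' = -cutWeight H := by
  classical
  let σ : (Fin s → Fin 2) → ℝ := fun ω => if ω = fun _ => 1 then -1 else 1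
  refine ⟨fun ω v => σ ω * H ω v, fun ω v => _root_.abs_le.1 ?_, ?_⟩
  · rw [abs_mul]
    calc |σ ω| * |H ω v| ≤ 1 * 1 := by
          gcongr
          · simp only [σ]; split_ifs <;> simp
          · exact hH.abs_le_one ω v
      _ = 1 := one_mul 1
  · have hmem : (fun _ => 1 : Fin s → Fin 2) ∈
        univ.filter (fun ω : Fin s → Fin 2 => ω ≠ fun _ => 0) := by
      simpa using fun h => absurd (congrFun h 0) (by decide)
    ext x
    simp only [cutWeight, prod_mul_distrib, σ, prod_ite_eq', if_pos hmem, Pi.neg_apply]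
    ring

variable [Fintype V]

noncomputable def cutCorr (F : (Fin s → V) → ℝ) (H : CutFamily V s) : ℝ :=
  𝔼 x, F (fun i => x i 0) * cutWeight H x

lemma avg_eq_expect (α : Type*) [Fintype α] (f : α → ℝ) : avg α f = 𝔼 x, f x :=
  (Fintype.expect_eq_sum_div_card f).symm

lemma cutNorm_eq_sSup (F : (Fin s → V) → ℝ) :
    cutNorm V s F = sSup (cutCorr F '' {H | IsCutFamily H}) := by
  simp only [cutNorm, cutCorr, cutWeight, avg_eq_expect, Set.image, IsCutFamily, eq_comm,
    Set.mem_ofPred_eq]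

lemma abs_cutCorr_le (F : (Fin s → V) → ℝ) {H : CutFamily V s}
    (hH : IsCutFamily H) : |cutCorr F H| ≤ 𝔼 x : Fin s → Fin 2 → V, |F fun i => x i 0| :=
  (abs_expect_le _ _).trans <| expect_le_expect fun x _ => by
    rw [abs_mul]
    exact mul_le_of_le_one_right (abs_nonneg _) (abs_cutWeight_le hH x)

lemma bddAbove_cutCorr_image (F : (Fin s → V) → ℝ) :
    BddAbove (cutCorr F '' {H | IsCutFamily H}) :=
  ⟨_, Set.forall_mem_image.2 fun _ hH => (le_abs_self _).trans (abs_cutCorr_le F hH)⟩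

lemma cutCorr_le_cutNorm (F : (Fin s → V) → ℝ) {H : CutFamily V s}
    (hH : IsCutFamily H) : cutCorr F H ≤ cutNorm V s F := by
  rw [cutNorm_eq_sSup]
  exact le_csSup (bddAbove_cutCorr_image F) ⟨H, hH, rfl⟩

lemma cutNorm_le {F : (Fin s → V) → ℝ} {c : ℝ}
    (h : ∀ H, IsCutFamily H → cutCorr F H ≤ c) : cutNorm V s F ≤ c := by
  rw [cutNorm_eq_sSup]
  exact csSup_le ⟨_, 1, isCutFamily_one, rfl⟩ (Set.forall_mem_image.2 h)

lemma exists_lt_cutCorr {F : (Fin s → V) → ℝ} {c : ℝ} (h : c < cutNorm V s F) :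
    ∃ H, IsCutFamily H ∧ c < cutCorr F H := by
  by_contra! h'
  exact (cutNorm_le h').not_gt h

lemma abs_cutCorr_le_cutNorm [NeZero s] (F : (Fin s → V) → ℝ)
    {H : CutFamily V s} (hH : IsCutFamily H) :
    |cutCorr F H| ≤ cutNorm V s F := by
  obtain ⟨H', hH', hneg⟩ := exists_cutWeight_eq_neg hH
  have : cutCorr F H' = -cutCorr F H := by
    simp only [cutCorr, hneg, Pi.neg_apply, mul_neg, expect_neg_distrib]
  refine abs_le'.2 ⟨cutCorr_le_cutNorm F hH, ?_⟩
  rw [← this]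
  exact cutCorr_le_cutNorm F hH'

lemma cutNorm_add_le (F G : (Fin s → V) → ℝ) :
    cutNorm V s (F + G) ≤ cutNorm V s F + cutNorm V s G :=
  cutNorm_le fun H hH => by
    have : cutCorr (F + G) H = cutCorr F H + cutCorr G H := by
      simp only [cutCorr, Pi.add_apply, add_mul, expect_add_distrib]
    rw [this]
    exact add_le_add (cutCorr_le_cutNorm F hH) (cutCorr_le_cutNorm G hH)

lemma cutNorm_neg_le [NeZero s] (F : (Fin s → V) → ℝ) : cutNorm V s (-F) ≤ cutNorm V s F :=
  cutNorm_le fun H hH => by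
    have : cutCorr (-F) H = -cutCorr F H := by
      simp only [cutCorr, Pi.neg_apply, neg_mul, expect_neg_distrib]
    rw [this]
    exact (neg_le_abs _).trans (abs_cutCorr_le_cutNorm F hH)

end CutNorm

section DualFunction

variable {Z : Type*} [AddCommGroup Z] {s : ℕ}

lemma addCutNorm_add_le [Fintype Z] (f g : Z → ℝ) :
    addCutNorm Z s (f + g) ≤ addCutNorm Z s f + addCutNorm Z s g :=
  cutNorm_add_le _ _

lemma addCutNorm_neg_le [Fintype Z] [NeZero s] (f : Z → ℝ) :
    addCutNorm Z s (-f) ≤ addCutNorm Z s f :=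
  cutNorm_neg_le _

def translateFamily (r : Fin s → Fin 2 → Z) (H : CutFamily Z s) : CutFamily Z s :=
  fun ω v => H ω (v + fun i => r i (ω i))

lemma IsCutFamily.translateFamily {H : CutFamily Z s} (hH : IsCutFamily H)
    (r : Fin s → Fin 2 → Z) : IsCutFamily (translateFamily r H) :=
  fun ω _ => hH ω _

lemma cutWeight_add (H : CutFamily Z s) (x r : Fin s → Fin 2 → Z) :
    cutWeight H (x + r) = cutWeight (translateFamily r H) x :=
  rfl

def colSum (x : Fin s → Fin 2 → Z) : Z := ∑ i, x i 0

lemma colSum_add (x y : Fin s → Fin 2 → Z) : colSum (x + y) = colSum x + colSum y :=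
  sum_add_distrib

variable [NeZero s]

def corner (a : Z) : Fin s → Fin 2 → Z := Pi.single 0 (Pi.single 0 a)

lemma colSum_corner (a : Z) : colSum (corner (s := s) a) = a := by
  simp [colSum, corner, Pi.single_apply, ite_apply]

lemma corner_add (a b : Z) : corner (s := s) (a + b) = corner a + corner b := by
  simp [corner, Pi.single_add]

lemma corner_sub (a b : Z) : corner (s := s) (a - b) = corner a - corner b := by
  simp [corner, Pi.single_sub]

variable [Fintype Z]

/-- `dualFun H z` averages the weight of `H` over the fibre `{x | colSum x = z}`, which is
parametrised by moving the free entry `x 0 0`. -/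
noncomputable def dualFun (H : CutFamily Z s) (z : Z) : ℝ :=
  𝔼 y, cutWeight H (y + corner (z - colSum y))

lemma cutCorr_addLift (f : Z → ℝ) (H : CutFamily Z s) :
    cutCorr (addLift Z s f) H = 𝔼 z, f z * dualFun H z := by
  symm
  calc 𝔼 z, f z * dualFun H z
      = 𝔼 y, 𝔼 z, f z * cutWeight H (y + corner (z - colSum y)) := by
        simp only [dualFun, mul_expect]
        exact expect_comm ..
    _ = 𝔼 y, 𝔼 t, f (t + colSum y) * cutWeight H (y + corner t) := by
        refine expect_congr rfl fun y _ => ?_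
        exact Fintype.expect_equiv (Equiv.subRight (colSum y)) _ _ fun z => by simp
    _ = 𝔼 t, 𝔼 x, f (colSum x) * cutWeight H x := by
        rw [expect_comm]
        refine expect_congr rfl fun t _ => ?_
        refine Fintype.expect_equiv (Equiv.addRight (corner t)) _ _ fun y => ?_
        simp [colSum_add, colSum_corner, add_comm]
    _ = cutCorr (addLift Z s f) H := by
        rw [Fintype.expect_const]
        rfl

lemma dualFun_mul (H₁ H₂ : CutFamily Z s) (z : Z) :
    dualFun H₁ z * dualFun H₂ z =
      𝔼 q, dualFun (H₁ * translateFamily (q - corner (colSum q)) H₂) z := by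
  calc dualFun H₁ z * dualFun H₂ z
      = 𝔼 y, 𝔼 q, cutWeight H₁ (y + corner (z - colSum y)) *
          cutWeight H₂ (y + q + corner (z - colSum (y + q))) := by
        rw [dualFun, dualFun, expect_mul_expect]
        refine expect_congr rfl fun y _ => ?_
        exact Fintype.expect_equiv (Equiv.addLeft y).symm _ _ fun y' => by simp
    _ = 𝔼 q, dualFun (H₁ * translateFamily (q - corner (colSum q)) H₂) z := by
        rw [expect_comm]
        refine expect_congr rfl fun q _ => expect_congr rfl fun y _ => ?_
        rw [cutWeight_mul, ← cutWeight_add, colSum_add]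
        congr 2
        simp only [corner_sub, corner_add]
        abel

end DualFunction

lemma Convex.expect_apply_mem {α ι : Type*} [Fintype ι] [Nonempty ι] {K : Set (α → ℝ)}
    (hK : Convex ℝ K) {f : ι → α → ℝ} (hf : ∀ i, f i ∈ K) : (fun a => 𝔼 i, f i a) ∈ K := by
  have : (fun a => 𝔼 i, f i a) = ∑ i, (Fintype.card ι : ℝ)⁻¹ • f i := by
    ext a
    simp [Fintype.expect_eq_sum_div_card, Finset.sum_apply, div_eq_inv_mul, mul_sum]
  rw [this]
  exact hK.sum_mem (fun _ _ => by positivity) (by simp) fun i _ => hf i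

noncomputable def corrForm (α : Type*) [Fintype α] : (α → ℝ) →ₗ[ℝ] (α → ℝ) →ₗ[ℝ] ℝ :=
  LinearMap.mk₂ ℝ (fun ψ f => 𝔼 a, f a * ψ a)
    (fun _ _ _ => by simp only [Pi.add_apply, mul_add, expect_add_distrib])
    (fun _ _ _ => by simp only [Pi.smul_apply, smul_eq_mul, mul_left_comm _ _, ← mul_expect])
    (fun _ _ _ => by simp only [Pi.add_apply, add_mul, expect_add_distrib])
    (fun _ _ _ => by simp only [Pi.smul_apply, smul_eq_mul, mul_assoc, ← mul_expect])

@[simp]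
lemma corrForm_apply {α : Type*} [Fintype α] (ψ f : α → ℝ) :
    corrForm α ψ f = 𝔼 a, f a * ψ a :=
  rfl

section DualHull

variable (Z : Type*) [AddCommGroup Z] [Fintype Z] (s : ℕ) [NeZero s]

def dualHull : Set (Z → ℝ) :=
  convexHull ℝ (dualFun '' {H : CutFamily Z s | IsCutFamily H})

variable {Z s}

lemma abs_dualFun_le {H : CutFamily Z s} (hH : IsCutFamily H) (z : Z) :
    |dualFun H z| ≤ 1 :=
  (abs_expect_le _ _).trans (expect_le univ_nonempty fun _ _ => abs_cutWeight_le hH _)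

lemma dualFun_one : dualFun (1 : CutFamily Z s) = 1 := by
  ext z
  simp [dualFun, cutWeight_one]

lemma dualFun_mem_dualHull {H : CutFamily Z s} (hH : IsCutFamily H) :
    dualFun H ∈ dualHull Z s :=
  subset_convexHull ℝ _ ⟨H, hH, rfl⟩

lemma one_mem_dualHull : (1 : Z → ℝ) ∈ dualHull Z s :=
  dualFun_one (Z := Z) (s := s) ▸ dualFun_mem_dualHull isCutFamily_one

lemma dualFun_mul_mem_dualHull {H₁ H₂ : CutFamily Z s}
    (h₁ : IsCutFamily H₁) (h₂ : IsCutFamily H₂) : dualFun H₁ * dualFun H₂ ∈ dualHull Z s := by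
  rw [show dualFun H₁ * dualFun H₂ = _ from funext (dualFun_mul H₁ H₂)]
  exact (convex_convexHull ℝ _).expect_apply_mem fun q =>
    dualFun_mem_dualHull (h₁.mul (h₂.translateFamily _))

lemma mul_mem_dualHull {ψ φ : Z → ℝ} (hψ : ψ ∈ dualHull Z s) (hφ : φ ∈ dualHull Z s) :
    ψ * φ ∈ dualHull Z s := by
  have hgen : ∀ {H}, IsCutFamily H → dualFun H * φ ∈ dualHull Z s := fun hH =>
    convexHull_min (by rintro _ ⟨H', hH', rfl⟩; exact dualFun_mul_mem_dualHull hH hH')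
      ((convex_convexHull ℝ _).linear_preimage (LinearMap.mulLeft ℝ (dualFun _))) hφ
  exact convexHull_min (by rintro _ ⟨H, hH, rfl⟩; exact hgen hH)
    ((convex_convexHull ℝ _).linear_preimage (LinearMap.mulRight ℝ φ)) hψ

lemma pow_mem_dualHull {ψ : Z → ℝ} (hψ : ψ ∈ dualHull Z s) (n : ℕ) : ψ ^ n ∈ dualHull Z s := by
  induction n with
  | zero => simpa using one_mem_dualHull
  | succ n ih => simpa [pow_succ] using mul_mem_dualHull ih hψ

lemma abs_le_one_of_mem_dualHull {ψ : Z → ℝ} (hψ : ψ ∈ dualHull Z s) (z : Z) : |ψ z| ≤ 1 := by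
  have : dualHull Z s ⊆ Set.univ.pi fun _ => Set.Icc (-1) 1 :=
    convexHull_min (by rintro _ ⟨H, hH, rfl⟩ z -; exact abs_le.1 (abs_dualFun_le hH z))
      (convex_pi fun _ _ => convex_Icc _ _)
  exact abs_le.2 (this hψ z trivial)

lemma abs_expect_mul_le_addCutNorm (f : Z → ℝ) {ψ : Z → ℝ} (hψ : ψ ∈ dualHull Z s) :
    |𝔼 z, f z * ψ z| ≤ addCutNorm Z s f := by
  have : dualHull Z s ⊆ (corrForm Z).flip f ⁻¹' Set.Icc (-addCutNorm Z s f) (addCutNorm Z s f) :=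
    convexHull_min (by
        rintro _ ⟨H, hH, rfl⟩
        simpa [← cutCorr_addLift, abs_le, addCutNorm] using abs_cutCorr_le_cutNorm (addLift Z s f) hH)
      ((convex_Icc _ _).linear_preimage _)
  simpa [abs_le] using this hψ

lemma expect_le_addCutNorm (f : Z → ℝ) : 𝔼 z, f z ≤ addCutNorm Z s f := by
  simpa using (le_abs_self _).trans (abs_expect_mul_le_addCutNorm f (one_mem_dualHull (s := s)))

lemma abs_expect_mul_eval_le (f : Z → ℝ) (P : Polynomial ℝ) {ψ : Z → ℝ}
    (hψ : ψ ∈ dualHull Z s) :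
    |𝔼 z, f z * P.eval (ψ z)| ≤ (P.sum fun _ a => |a|) * addCutNorm Z s f := by
  simp only [Polynomial.eval_eq_sum, Polynomial.sum_def, mul_sum, expect_sum_comm, sum_mul]
  refine (abs_sum_le_sum_abs _ _).trans (sum_le_sum fun n _ => ?_)
  have : 𝔼 z, f z * (P.coeff n * ψ z ^ n) = P.coeff n * 𝔼 z, f z * (ψ ^ n) z := by
    rw [mul_expect]
    simp only [Pi.pow_apply, mul_left_comm]
  rw [this, abs_mul]
  gcongr
  exact abs_expect_mul_le_addCutNorm f (pow_mem_dualHull hψ n)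

end DualHull

section Minimax

/-- Separate `T` from the orthant `{τ | ∀ i, τ i ≤ c}`; the separating functional has
nonnegative coefficients because the orthant is unbounded below in every coordinate. -/
theorem exists_mem_stdSimplex_forall_lt {ι : Type*} [Fintype ι] {T : Set (ι → ℝ)}
    (hTconv : Convex ℝ T) (hTcpt : IsCompact T) (hTne : T.Nonempty) {c : ℝ}
    (h : ∀ τ ∈ T, ∃ i, c < τ i) : ∃ μ ∈ stdSimplex ℝ ι, ∀ τ ∈ T, c < ∑ i, μ i * τ i := by
  classical
  let Q : Set (ι → ℝ) := Set.univ.pi fun _ => Set.Iic c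
  have hdisj : Disjoint Q T := Set.disjoint_left.2 fun τ hQ hT => by
    obtain ⟨i, hi⟩ := h τ hT
    exact (hQ i trivial).not_gt hi
  obtain ⟨ℓ, u, v, hQu, huv, hTv⟩ := geometric_hahn_banach_closed_compact
    (convex_pi fun _ _ => convex_Iic c) (isClosed_set_pi fun _ _ => isClosed_Iic) hTconv hTcpt
    hdisj
  let e : ι → ι → ℝ := fun i j => if i = j then 1 else 0
  let a : ι → ℝ := fun i => ℓ (e i)
  have hℓ : ∀ τ, ℓ τ = ∑ i, a i * τ i := fun τ => by
    rw [← ContinuousLinearMap.coe_coe, LinearMap.pi_apply_eq_sum_univ]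
    simp [a, e, mul_comm]
  have hcQ : (fun _ => c) ∈ Q := fun _ _ => Set.mem_Iic.2 le_rfl
  have ha : ∀ i, 0 ≤ a i := fun i => by
    by_contra! hai
    let t := (u - ℓ (fun _ => c)) / -a i
    have ht : 0 ≤ t := div_nonneg (by linarith [hQu _ hcQ]) (by linarith)
    have hmem : (fun _ => c) - t • e i ∈ Q := fun j _ => by
      simp only [Pi.sub_apply, Pi.smul_apply, smul_eq_mul, e, Set.mem_Iic]
      split_ifs <;> nlinarith
    have := hQu _ hmem
    rw [map_sub, map_smul, smul_eq_mul] at this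
    have : t * a i = -(u - ℓ (fun _ => c)) := by
      simp only [t]
      field_simp
      rw [mul_div_assoc, div_self hai.ne, mul_one]
    linarith
  have hsum : 0 < ∑ i, a i := by
    refine (sum_nonneg fun i _ => ha i).lt_of_ne fun hzero => ?_
    have hℓ0 : ∀ τ, ℓ τ = 0 := fun τ => by
      rw [hℓ]
      exact sum_eq_zero fun i _ => by
        rw [(sum_eq_zero_iff_of_nonneg fun i _ => ha i).1 hzero.symm i (mem_univ i), zero_mul]
    obtain ⟨τ, hτ⟩ := hTne
    linarith [hQu _ hcQ, hTv τ hτ, hℓ0 τ, hℓ0 fun _ => c]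
  refine ⟨fun i => a i / ∑ j, a j, ⟨fun i => div_nonneg (ha i) hsum.le, ?_⟩, fun τ hτ => ?_⟩
  · rw [← sum_div, div_self hsum.ne']
  · have hlt : c * ∑ i, a i < ∑ i, a i * τ i := by
      have := hQu _ hcQ
      rw [hℓ, ← sum_mul] at this
      linarith [hTv τ hτ, hℓ τ]
    simp only [div_mul_eq_mul_div, ← sum_div]
    rw [lt_div_iff₀ hsum]
    linarith

/-- By compactness finitely many `φ ∈ G` suffice, and the finite case applies to them. -/
theorem exists_mem_convexHull_forall_lt {E F : Type*} [AddCommGroup E] [Module ℝ E]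
    [TopologicalSpace E] [AddCommGroup F] [Module ℝ F] (B : F →ₗ[ℝ] E →ₗ[ℝ] ℝ)
    (hB : ∀ φ, Continuous (B φ)) {K : Set E} (hKconv : Convex ℝ K) (hKcpt : IsCompact K)
    (hKne : K.Nonempty) {G : Set F} {c : ℝ} (h : ∀ f ∈ K, ∃ φ ∈ G, c < B φ f) :
    ∃ ψ ∈ convexHull ℝ G, ∀ f ∈ K, c < B ψ f := by
  obtain ⟨t, htG, htfin, hcover⟩ := hKcpt.elim_finite_subcover_image
    (fun φ _ => isOpen_lt continuous_const (hB φ)) fun f hf => by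
      obtain ⟨φ, hφ, hlt⟩ := h f hf
      exact Set.mem_biUnion hφ hlt
  have := htfin.fintype
  let L : E →ₗ[ℝ] (t → ℝ) := LinearMap.pi fun φ => B φ
  obtain ⟨μ, ⟨hμ0, hμ1⟩, hμ⟩ := exists_mem_stdSimplex_forall_lt (hKconv.linear_image L)
    (hKcpt.image (continuous_pi fun φ => hB φ)) (hKne.image L) (c := c) (by
      rintro _ ⟨f, hf, rfl⟩
      obtain ⟨φ, hφ, hlt⟩ := Set.mem_iUnion₂.1 (hcover hf)
      exact ⟨⟨φ, hφ⟩, hlt⟩)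
  refine ⟨∑ φ : t, μ φ • (φ : F), (convex_convexHull ℝ G).sum_mem (fun φ _ => hμ0 φ) hμ1
    fun φ _ => subset_convexHull ℝ G (htG φ.2), fun f hf => ?_⟩
  simpa [L, mul_comm] using hμ (L f) ⟨f, hf, rfl⟩

end Minimax

section DenseModel

variable {Z : Type*} [AddCommGroup Z] [Fintype Z] {s : ℕ} [NeZero s]

lemma exists_mem_dualHull_forall_lt {g : Z → ℝ} {c : ℝ}
    (h : ∀ w : Z → ℝ, (∀ x, w x ∈ Set.Icc (0 : ℝ) 1) → c < addCutNorm Z s (fun z => g z - w z)) :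
    ∃ ψ ∈ dualHull Z s, ∀ w : Z → ℝ, (∀ x, w x ∈ Set.Icc (0 : ℝ) 1) →
      c < 𝔼 z, (g z - w z) * ψ z := by
  obtain ⟨ψ, hψ, hlt⟩ := exists_mem_convexHull_forall_lt (corrForm Z)
    (fun _ => LinearMap.continuous_of_finiteDimensional _)
    (convex_pi fun _ _ => convex_Icc _ _) (isCompact_univ_pi fun _ => isCompact_Icc)
    ⟨g, fun z _ => ⟨by linarith, le_rfl⟩⟩ (K := Set.univ.pi fun z => Set.Icc (g z - 1) (g z))
    (G := dualFun '' {H | IsCutFamily H}) (c := c) fun f hf => by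
      have := h (fun z => g z - f z) fun z =>
        ⟨by linarith [(hf z trivial).2], by linarith [(hf z trivial).1]⟩
      simp only [sub_sub_cancel] at this
      obtain ⟨H, hH, hlt⟩ := exists_lt_cutCorr (F := addLift Z s f) this
      exact ⟨_, ⟨H, hH, rfl⟩, by simpa [cutCorr_addLift] using hlt⟩
  refine ⟨ψ, hψ, fun w hw => ?_⟩
  simpa using hlt (fun z => g z - w z) fun z _ =>
    ⟨by linarith [(hw z).2], by linarith [(hw z).1]⟩

lemma sub_ite_mul_le_mul_max {g ν t : ℝ} (hg : 0 ≤ g) (hgν : g ≤ ν) :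
    (g - if 0 ≤ t then 1 else 0) * t ≤ (ν - 1) * max t 0 := by
  split_ifs with ht
  · rw [max_eq_left ht]
    nlinarith
  · rw [max_eq_right (le_of_not_ge ht)]
    nlinarith

/-- `ψ` takes values in `[-1, 1]`, where `max · 0` is within `δ` of the polynomial `P`. -/
lemma expect_mul_max_zero_le {ν ψ : Z → ℝ} (hν : ∀ x, 0 ≤ ν x) (hψ : ψ ∈ dualHull Z s)
    (P : Polynomial ℝ) {δ : ℝ} (hP : ∀ x ∈ Set.Icc (-1 : ℝ) 1, |P.eval x - max x 0| ≤ δ) :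
    𝔼 z, (ν z - 1) * max (ψ z) 0 ≤
      (P.sum fun _ a => |a|) * addCutNorm Z s (fun z => ν z - 1) +
        δ * (addCutNorm Z s (fun z => ν z - 1) + 2) := by
  have herr : ∀ z, (ν z - 1) * (max (ψ z) 0 - P.eval (ψ z)) ≤ δ * ((ν z - 1) + 2) := fun z => by
    have hδ := hP (ψ z) (abs_le.1 (abs_le_one_of_mem_dualHull hψ z))
    rw [abs_sub_comm] at hδ
    calc _ ≤ |ν z - 1| * |max (ψ z) 0 - P.eval (ψ z)| := (le_abs_self _).trans (abs_mul _ _).le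
      _ ≤ (ν z + 1) * δ :=
          mul_le_mul (abs_le.2 ⟨by linarith [hν z], by linarith⟩) hδ (abs_nonneg _)
            (by linarith [hν z])
      _ = _ := by ring
  calc 𝔼 z, (ν z - 1) * max (ψ z) 0
      = 𝔼 z, (ν z - 1) * P.eval (ψ z) + 𝔼 z, (ν z - 1) * (max (ψ z) 0 - P.eval (ψ z)) := by
        rw [← expect_add_distrib]
        exact expect_congr rfl fun z _ => by ring
    _ ≤ (P.sum fun _ a => |a|) * addCutNorm Z s (fun z => ν z - 1) +
          δ * (𝔼 z, (ν z - 1) + 2) := by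
        gcongr
        · exact (le_abs_self _).trans (abs_expect_mul_eval_le _ P hψ)
        · refine (expect_le_expect fun z _ => herr z).trans_eq ?_
          rw [← mul_expect, expect_add_distrib, Fintype.expect_const]
    _ ≤ _ := by
        have hδ : 0 ≤ δ := (abs_nonneg _).trans (hP 0 ⟨by norm_num, by norm_num⟩)
        gcongr
        exact expect_le_addCutNorm _

/-- If no `w` were good enough, `exists_mem_dualHull_forall_lt` would give a `ψ`, and the
indicator of `{ψ ≥ 0}` contradicts it. -/
theorem exists_dense_model {ν g : Z → ℝ} (hν : ∀ x, 0 ≤ ν x) (hg : ∀ x, 0 ≤ g x ∧ g x ≤ ν x)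
    (P : Polynomial ℝ) {δ : ℝ} (hP : ∀ x ∈ Set.Icc (-1 : ℝ) 1, |P.eval x - max x 0| ≤ δ) :
    ∃ w : Z → ℝ, (∀ x, w x ∈ Set.Icc (0 : ℝ) 1) ∧
      addCutNorm Z s (fun z => g z - w z) ≤
        (P.sum fun _ a => |a|) * addCutNorm Z s (fun z => ν z - 1) +
          δ * (addCutNorm Z s (fun z => ν z - 1) + 2) := by
  by_contra! hcon
  obtain ⟨ψ, hψ, hlt⟩ := exists_mem_dualHull_forall_lt hcon
  have hw : ∀ x, (if 0 ≤ ψ x then 1 else 0 : ℝ) ∈ Set.Icc (0 : ℝ) 1 := fun x => by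
    split_ifs <;> simp
  have hle := expect_le_expect (s := univ) fun z _ =>
    sub_ite_mul_le_mul_max (t := ψ z) (hg z).1 (hg z).2
  linarith [hlt _ hw, expect_mul_max_zero_le hν hψ P hP]

theorem exists_signed_dense_model {ν f : Z → ℝ} {c : ℝ}
    (hmodel : ∀ g : Z → ℝ, (∀ x, 0 ≤ g x ∧ g x ≤ ν x) → ∃ w : Z → ℝ,
      (∀ x, w x ∈ Set.Icc (0 : ℝ) 1) ∧ addCutNorm Z s (fun z => g z - w z) ≤ c)
    (hf : ∀ x, |f x| ≤ ν x) :
    ∃ h : Z → ℝ, (∀ x, h x ∈ Set.Icc (-1 : ℝ) 1) ∧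
      addCutNorm Z s (fun z => f z - h z) ≤ c + c := by
  obtain ⟨w₁, hw₁, h₁⟩ := hmodel (fun z => max (f z) 0) fun x =>
    ⟨le_max_right _ _, max_le ((le_abs_self _).trans (hf x)) ((abs_nonneg _).trans (hf x))⟩
  obtain ⟨w₂, hw₂, h₂⟩ := hmodel (fun z => max (-f z) 0) fun x =>
    ⟨le_max_right _ _, max_le ((neg_le_abs _).trans (hf x)) ((abs_nonneg _).trans (hf x))⟩
  refine ⟨fun z => w₁ z - w₂ z, fun x => ⟨by linarith [(hw₁ x).1, (hw₂ x).2],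
    by linarith [(hw₁ x).2, (hw₂ x).1]⟩, ?_⟩
  have hsplit : (fun z => f z - (w₁ z - w₂ z)) =
      (fun z => max (f z) 0 - w₁ z) + -fun z => max (-f z) 0 - w₂ z := by
    ext z
    have := max_zero_sub_max_neg_zero_eq_self (f z)
    simp only [Pi.add_apply, Pi.neg_apply]
    linarith
  rw [hsplit]
  exact (addCutNorm_add_le _ _).trans (add_le_add h₁ ((addCutNorm_neg_le _).trans h₂))

theorem exists_threshold_dense_model {ε : ℝ} (hε : 0 < ε) :
    ∃ η : ℝ, 0 < η ∧ η ≤ 1 ∧ ∀ (s : ℕ) [NeZero s] (Z : Type*) [AddCommGroup Z] [Fintype Z]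
      (ν : Z → ℝ), (∀ x, 0 ≤ ν x) → addCutNorm Z s (fun x => ν x - 1) ≤ η →
      ∀ g : Z → ℝ, (∀ x, 0 ≤ g x ∧ g x ≤ ν x) → ∃ w : Z → ℝ,
        (∀ x, w x ∈ Set.Icc (0 : ℝ) 1) ∧ addCutNorm Z s (fun z => g z - w z) ≤ ε := by
  obtain ⟨P, hP⟩ := exists_polynomial_near_of_continuousOn (-1) 1 (fun x => max x 0)
    (continuous_id.max continuous_const).continuousOn (ε / 6) (by positivity)
  set C := P.sum fun _ a => |a|
  have hC : 0 ≤ C := sum_nonneg fun _ _ => abs_nonneg _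
  refine ⟨min 1 (ε / (2 * (C + 1))), by positivity, min_le_left _ _,
    fun s _ Z _ _ ν hν hνη g hg => ?_⟩
  obtain ⟨w, hw, hgw⟩ := exists_dense_model (s := s) hν hg P fun x hx => (hP x hx).le
  refine ⟨w, hw, hgw.trans ?_⟩
  have hη : C * min 1 (ε / (2 * (C + 1))) ≤ ε / 2 :=
    calc C * min 1 (ε / (2 * (C + 1))) ≤ (C + 1) * (ε / (2 * (C + 1))) := by
          gcongr
          · linarith
          · exact min_le_right _ _
      _ = ε / 2 := by field_simp
  have := hνη.trans (min_le_left _ _)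
  nlinarith [mul_le_mul_of_nonneg_left hνη hC]

end DenseModel

theorem stmt9 (ε : ℝ) (hε : 0 < ε) :
    ∃ η : ℝ, 0 < η ∧ η ≤ 1 ∧
      ∀ (s : ℕ), 2 ≤ s →
        ∀ (Z : Type) [AddCommGroup Z] [Fintype Z] (ν : Z → ℝ),
          (∀ x, 0 ≤ ν x) →
          addCutNorm Z s (fun x => ν x - 1) ≤ η →
          (∀ g : Z → ℝ, (∀ x, 0 ≤ g x ∧ g x ≤ ν x) →
            ∃ w : Z → ℝ, (∀ x, w x ∈ Set.Icc (0 : ℝ) 1) ∧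
              addCutNorm Z s (fun x => g x - w x) ≤ ε) ∧
          (∀ f : Z → ℝ, (∀ x, |f x| ≤ ν x) →
            ∃ h : Z → ℝ, (∀ x, h x ∈ Set.Icc (-1 : ℝ) 1) ∧
              addCutNorm Z s (fun x => f x - h x) ≤ ε) := by
  obtain ⟨η, hη, hη1, hmodel⟩ := exists_threshold_dense_model (half_pos hε)
  refine ⟨η, hη, hη1, fun s hs Z _ _ ν hν hνη => ?_⟩
  have : NeZero s := ⟨by omega⟩
  have hmodel := hmodel s Z ν hν hνη
  refine ⟨fun g hg => ?_, fun f hf => ?_⟩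
  · obtain ⟨w, hw, hgw⟩ := hmodel g hg
    exact ⟨w, hw, hgw.trans (half_le_self hε.le)⟩
  · simpa using exists_signed_dense_model hmodel hf
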